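/- arXiv:2410.13522 — 4 statements merged into one kernel-verified Lean document; each statement's English description precedes it below -/
import Mathlib

section
/- Let d ≥ 2, let π : {1,...,d} → [0,1] satisfy Σ_{b=1}^{d} π_b = 1, and for each a ∈ {1,...,d} let q_a : {1,...,d} → [0,1] satisfy Σ_{b=1}^{d} q_a(b) = 1. Assume: (i) for all a, c: π_c = 0 implies q_a(c) = 0; (ii) for every a: q_a(a) ≥ π_a and q_a(b) ≤ π_b for all b ≠ a; (iii) for all a ≠ a' and all c ∉ {a, a'}: q_a(c) = q_{a'}(c). If π_c = 0 for some c ∈ {1,...,d}, then q_a(b) = π_b for all a, b ∈ {1,...,d}. -/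
open Finset

/-- Pointwise preliminary claim in the proof of Lemma A.1: under q-weak positivity (i),
the weak inequalities of Property 1 (ii), and Property 2 for all pairs (iii), if some
treatment has zero probability then every intervention leaves all treatment probabilities
unchanged. -/
theorem stmt_10 (d : ℕ) (hd : 2 ≤ d) (π : Fin d → ℝ)
    (hπ01 : ∀ b, π b ∈ Set.Icc (0 : ℝ) 1) (hπsum : ∑ b, π b = 1)
    (q : Fin d → Fin d → ℝ)
    (hq01 : ∀ a b, q a b ∈ Set.Icc (0 : ℝ) 1)
    (hqsum : ∀ a, ∑ b, q a b = 1)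
    (hi : ∀ a c, π c = 0 → q a c = 0)
    (hii : ∀ a : Fin d, π a ≤ q a a ∧ ∀ b, b ≠ a → q a b ≤ π b)
    (hiii : ∀ a a' : Fin d, a ≠ a' → ∀ c, c ≠ a → c ≠ a' → q a c = q a' c)
    (c : Fin d) (hc : π c = 0) :
    ∀ a b, q a b = π b := by
  -- Step 1: q c = π
  have hqc : ∀ b, q c b = π b := by
    have hnn : ∀ b ∈ (univ : Finset (Fin d)), 0 ≤ π b - q c b := by
      intro b _
      by_cases hb : b = c
      · have h0 := hi c c hc; rw [hb, h0, hc]; norm_num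
      · linarith [(hii c).2 b hb]
    have hsum : ∑ b, (π b - q c b) = 0 := by
      rw [Finset.sum_sub_distrib, hπsum, hqsum]; ring
    have := (Finset.sum_eq_zero_iff_of_nonneg hnn).mp hsum
    intro b; have := this b (mem_univ b); linarith
  intro a
  by_cases hac : a = c
  · subst hac; exact hqc
  -- Step 2: all b ≠ a agree
  have hoff : ∀ b, b ≠ a → q a b = π b := by
    intro b hb
    by_cases hbc : b = c
    · rw [hbc, hi a c hc, hc]
    · rw [hiii a c hac b hb hbc, hqc b]
  -- Step 3: b = a via sums
  have ha : q a a = π a := by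
    have h1 : ∑ b, (q a b - π b) = 0 := by
      rw [Finset.sum_sub_distrib, hπsum, hqsum]; ring
    rw [← Finset.add_sum_erase _ _ (mem_univ a)] at h1
    have h2 : ∑ b ∈ univ.erase a, (q a b - π b) = 0 :=
      Finset.sum_eq_zero (fun b hb => by rw [hoff b (Finset.mem_erase.mp hb).1]; ring)
    rw [h2] at h1; linarith
  intro b
  by_cases hb : b = a
  · subst hb; exact ha
  · exact hoff b hb
end

section
/- Let (Ω, ℱ, P) be a probability space, let X : Ω → 𝒳 be measurable into a measurable space 𝒳, and let d ≥ 2. For each a ∈ {1,...,d} let π_a : 𝒳 → [0,1] be measurable with Σ_{a=1}^{d} π_a(x) = 1 for all x, and let q_a : 𝒳 → ({1,...,d} → [0,1]) be measurable with Σ_{b=1}^{d} q_a(b|x) = 1 for all x. Assume the following hold P-almost surely in X: (i) for all a, c: π_c(X) = 0 implies q_a(c|X) = 0; (ii) for every a: q_a(a|X) ≥ π_a(X) and q_a(b|X) ≤ π_b(X) for all b ≠ a; (iii) for all a ≠ a' and all c ∉ {a, a'}: q_a(c|X) = q_{a'}(c|X). Assume furthermore that for some a ∈ {1,...,d}, P{q_a(a|X)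 > π_a(X)} > 0. Then P{π_a(X) > 0 for all a ∈ {1,...,d}} > 0. -/
open Finset MeasureTheory

/-- Theorem 1 (necessary positivity assumption), case V = X: if q-weak positivity (i),
the weak inequalities of Property 1 (ii), and Property 2 for all pairs (iii) hold
P-almost surely in X, and for some target `a` the intervention strictly increases the
probability of treatment `a` with positive probability, then the trimmed set
`{x : π_a(x) > 0 for all a}` has positive probability. -/
theorem stmt_13 {Ω 𝒳 : Type*} [MeasurableSpace Ω] [MeasurableSpace 𝒳]
    (P : Measure Ω) [IsProbabilityMeasure P]
    (X : Ω → 𝒳) (hX : Measurable X)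
    (d : ℕ) (hd : 2 ≤ d)
    (π : Fin d → 𝒳 → ℝ)
    (hπ_meas : ∀ a, Measurable (π a))
    (hπ01 : ∀ a x, π a x ∈ Set.Icc (0 : ℝ) 1)
    (hπsum : ∀ x, ∑ a, π a x = 1)
    (q : Fin d → 𝒳 → Fin d → ℝ)
    (hq_meas : ∀ a b, Measurable (fun x => q a x b))
    (hq01 : ∀ a b x, q a x b ∈ Set.Icc (0 : ℝ) 1)
    (hqsum : ∀ a x, ∑ b, q a x b = 1)
    (hi : ∀ᵐ ω ∂P, ∀ a c, π c (X ω) = 0 → q a (X ω) c = 0)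
    (hii : ∀ᵐ ω ∂P, ∀ a : Fin d,
      π a (X ω) ≤ q a (X ω) a ∧ ∀ b, b ≠ a → q a (X ω) b ≤ π b (X ω))
    (hiii : ∀ᵐ ω ∂P, ∀ a a' : Fin d, a ≠ a' →
      ∀ c, c ≠ a → c ≠ a' → q a (X ω) c = q a' (X ω) c)
    (a : Fin d) (hstrict : 0 < P {ω | π a (X ω) < q a (X ω) a}) :
    0 < P {ω | ∀ a : Fin d, 0 < π a (X ω)} := by
  refine hstrict.trans_le (measure_mono_ae ?_)
  filter_upwards [hi, hii, hiii] with ω h1 h2 h3 hlt c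
  set x := X ω with hx
  replace hlt : π a x < q a x a := hlt
  by_contra hc
  have hc0 : π c x = 0 := le_antisymm (not_lt.mp hc) (hπ01 c x).1
  rcases eq_or_ne c a with rfl | hne
  · have := h1 c c hc0
    have := (hπ01 c x).1
    linarith
  · have hqcc : q c x c = 0 := h1 c c hc0
    have hqac : q a x c = 0 := h1 a c hc0
    -- all terms of q c equal π on erase c
    have hle : ∀ b ∈ univ.erase c, q c x b ≤ π b x :=
      fun b hb => (h2 c).2 b (Finset.ne_of_mem_erase hb)
    have hsum1 : q c x c + ∑ b ∈ univ.erase c, q c x b = 1 := by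
      rw [Finset.add_sum_erase univ _ (mem_univ c), hqsum]
    have hsum2 : π c x + ∑ b ∈ univ.erase c, π b x = 1 := by
      rw [Finset.add_sum_erase univ (fun b => π b x) (mem_univ c), hπsum]
    have hsum_eq : ∑ b ∈ univ.erase c, q c x b = ∑ b ∈ univ.erase c, π b x := by
      rw [hqcc] at hsum1; rw [hc0] at hsum2; linarith
    have heqall := (Finset.sum_eq_sum_iff_of_le hle).mp hsum_eq
    have hqca : q c x a = π a x := by
      have := heqall a (Finset.mem_erase.mpr ⟨(Ne.symm hne), mem_univ a⟩)
      linarith [this]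
    -- sums of q a and q c agree; off-{a,c} terms agree by (iii)
    have hpair : ∀ g : Fin d → ℝ, ∑ b, g b = g a + g c + ∑ b ∈ univ \ {a, c}, g b := by
      intro g
      rw [← Finset.sum_sdiff (Finset.subset_univ ({a, c} : Finset (Fin d))),
        Finset.sum_pair (Ne.symm hne)]
      ring
    have hoff : ∑ b ∈ univ \ {a, c}, q a x b = ∑ b ∈ univ \ {a, c}, q c x b := by
      refine Finset.sum_congr rfl fun b hb => ?_
      simp only [Finset.mem_sdiff, Finset.mem_insert, Finset.mem_singleton] at hb
      exact h3 a c (Ne.symm hne) b (fun h => hb.2 (Or.inl h)) (fun h => hb.2 (Or.inr h))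
    have h4 : q a x a + q a x c + ∑ b ∈ univ \ {a, c}, q a x b
        = q c x a + q c x c + ∑ b ∈ univ \ {a, c}, q c x b := by
      rw [← hpair (q a x), ← hpair (q c x), hqsum, hqsum]
    rw [hoff, hqac, hqcc, hqca] at h4
    linarith
end

section
/- Let (Ω, ℱ, P) be a probability space with sub-σ-algebras 𝒱 ⊆ 𝒳 ⊆ ℱ. Let B : Ω → {0,1} be measurable, let Y : Ω → ℝ be bounded measurable, and let π, π̄, μ, μ̄ : Ω → ℝ be bounded 𝒳-measurable with π̄ ≥ ε everywhere for some ε > 0. Assume E[B | 𝒳] = π almost surely and E[B·Y | 𝒳] = π·μ almost surely. Then, almost surely, E[(B/π̄)·(Y − μ̄) + μ̄ | 𝒱] − E[μ | 𝒱] = E[((π − π̄)/π̄)·(μ − μ̄) | 𝒱]. -/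
open MeasureTheory

/-- Lemma C.1 (lem:reg-eif): the conditional bias of the uncentered doubly robust
pseudo-outcome for the projected outcome regression `E[μ | 𝒱]` equals the conditional
expectation of the product of nuisance errors. -/
theorem stmt_14 {Ω : Type*} (𝒱 𝒳 : MeasurableSpace Ω) [mΩ : MeasurableSpace Ω] (P : Measure Ω) [IsProbabilityMeasure P]
    (hVX : 𝒱 ≤ 𝒳) (hXm : 𝒳 ≤ mΩ)
    (B Y π πbar μ μbar : Ω → ℝ)
    (hB_meas : Measurable B) (hB01 : ∀ ω, B ω = 0 ∨ B ω = 1)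
    (hY_meas : Measurable Y) (hY_bdd : ∃ M : ℝ, ∀ ω, |Y ω| ≤ M)
    (hπ_meas : Measurable[𝒳] π) (hπ_bdd : ∃ M : ℝ, ∀ ω, |π ω| ≤ M)
    (hπbar_meas : Measurable[𝒳] πbar) (hπbar_bdd : ∃ M : ℝ, ∀ ω, |πbar ω| ≤ M)
    (hμ_meas : Measurable[𝒳] μ) (hμ_bdd : ∃ M : ℝ, ∀ ω, |μ ω| ≤ M)
    (hμbar_meas : Measurable[𝒳] μbar) (hμbar_bdd : ∃ M : ℝ, ∀ ω, |μbar ω| ≤ M)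
    (ε : ℝ) (hε : 0 < ε) (hπbar_lb : ∀ ω, ε ≤ πbar ω)
    (h1 : P[B | 𝒳] =ᵐ[P] π)
    (h2 : P[fun ω => B ω * Y ω | 𝒳] =ᵐ[P] fun ω => π ω * μ ω) :
    ∀ᵐ ω ∂P,
      (P[fun ω' => (B ω' / πbar ω') * (Y ω' - μbar ω') + μbar ω' | 𝒱]) ω
          - (P[μ | 𝒱]) ω
        = (P[fun ω' => ((π ω' - πbar ω') / πbar ω') * (μ ω' - μbar ω') | 𝒱]) ω := by
  obtain ⟨MY, hMY⟩ := hY_bdd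
  obtain ⟨Mπ, hMπ⟩ := hπ_bdd
  obtain ⟨Mπb, hMπb⟩ := hπbar_bdd
  obtain ⟨Mμ, hMμ⟩ := hμ_bdd
  obtain ⟨Mμb, hMμb⟩ := hμbar_bdd
  have hπbar_pos : ∀ ω, 0 < πbar ω := fun ω => lt_of_lt_of_le hε (hπbar_lb ω)
  have hπbar_ne : ∀ ω, πbar ω ≠ 0 := fun ω => (hπbar_pos ω).ne'
  have hB1 : ∀ ω, |B ω| ≤ 1 := by
    intro ω; rcases hB01 ω with h | h <;> simp [h]
  -- integrability of bounded measurable functions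
  have key : ∀ (f : Ω → ℝ), Measurable f → (∃ M, ∀ ω, |f ω| ≤ M) → Integrable f P := by
    rintro f hf ⟨M, hM⟩
    exact ⟨hf.aestronglyMeasurable,
      HasFiniteIntegral.of_bounded (μ := P) (C := M)
        (ae_of_all _ (by simpa [Real.norm_eq_abs] using hM))⟩
  -- ambient measurability
  have hπm := hπ_meas.mono hXm le_rfl
  have hπbm := hπbar_meas.mono hXm le_rfl
  have hμm := hμ_meas.mono hXm le_rfl
  have hμbm := hμbar_meas.mono hXm le_rfl
  have hinv_bdd : ∀ ω, |(πbar ω)⁻¹| ≤ ε⁻¹ := by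
    intro ω
    rw [abs_of_pos (inv_pos.mpr (hπbar_pos ω))]
    exact inv_anti₀ hε (hπbar_lb ω)
  set F1 : Ω → ℝ := fun ω => (πbar ω)⁻¹ * (B ω * Y ω) with hF1
  set F2 : Ω → ℝ := fun ω => (-(μbar ω) * (πbar ω)⁻¹) * B ω with hF2
  -- integrability facts
  have hBY_int : Integrable (fun ω => B ω * Y ω) P :=
    key _ (hB_meas.mul hY_meas) ⟨|MY|, fun ω => by
      calc |B ω * Y ω| = |B ω| * |Y ω| := abs_mul _ _
        _ ≤ 1 * |MY| :=
            mul_le_mul (hB1 ω) ((hMY ω).trans (le_abs_self MY)) (abs_nonneg _) zero_le_one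
        _ = |MY| := one_mul _⟩
  have hB_int : Integrable B P := key _ hB_meas ⟨1, hB1⟩
  have hμ_int : Integrable μ P := key _ hμm ⟨Mμ, hMμ⟩
  have hμbar_int : Integrable μbar P := key _ hμbm ⟨Mμb, hMμb⟩
  have hint1 : Integrable F1 P :=
    key _ (hπbm.inv.mul (hB_meas.mul hY_meas)) ⟨ε⁻¹ * |MY|, fun ω => by
      calc |F1 ω| = |(πbar ω)⁻¹| * |B ω * Y ω| := abs_mul _ _
        _ ≤ ε⁻¹ * (1 * |MY|) := by
            refine mul_le_mul (hinv_bdd ω) ?_ (abs_nonneg _) (by positivity)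
            rw [abs_mul]
            exact mul_le_mul (hB1 ω) ((hMY ω).trans (le_abs_self MY)) (abs_nonneg _) zero_le_one
        _ = ε⁻¹ * |MY| := by ring⟩
  have hc2_bdd : ∀ ω, |(-(μbar ω) * (πbar ω)⁻¹)| ≤ |Mμb| * ε⁻¹ := by
    intro ω
    rw [abs_mul, abs_neg]
    exact mul_le_mul ((hMμb ω).trans (le_abs_self _)) (hinv_bdd ω) (abs_nonneg _) (abs_nonneg _)
  have hint2 : Integrable F2 P :=
    key _ ((hμbm.neg.mul hπbm.inv).mul hB_meas) ⟨|Mμb| * ε⁻¹, fun ω => by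
      calc |F2 ω| = |(-(μbar ω) * (πbar ω)⁻¹)| * |B ω| := abs_mul _ _
        _ ≤ (|Mμb| * ε⁻¹) * 1 := mul_le_mul (hc2_bdd ω) (hB1 ω) (abs_nonneg _) (by positivity)
        _ = |Mμb| * ε⁻¹ := mul_one _⟩
  -- condexp of each piece w.r.t. 𝒳
  have hf1 : P[F1 | 𝒳] =ᵐ[P] fun ω => (πbar ω)⁻¹ * (π ω * μ ω) := by
    have := condExp_mul_of_stronglyMeasurable_left (μ := P) (m := 𝒳)
      hπbar_meas.inv.stronglyMeasurable (g := fun ω => B ω * Y ω) hint1 hBY_int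
    refine this.trans ?_
    filter_upwards [h2] with ω hω
    simp only [Pi.mul_apply, Pi.inv_apply, hω]
  have hf2 : P[F2 | 𝒳] =ᵐ[P] fun ω => (-(μbar ω) * (πbar ω)⁻¹) * π ω := by
    have := condExp_mul_of_stronglyMeasurable_left (μ := P) (m := 𝒳)
      (hμbar_meas.neg.mul hπbar_meas.inv).stronglyMeasurable (g := B) hint2 hB_int
    refine this.trans ?_
    filter_upwards [h1] with ω hω
    simp only [Pi.mul_apply, Pi.inv_apply, Pi.neg_apply, hω]
  have hf3 : P[μbar | 𝒳] = μbar :=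
    condExp_of_stronglyMeasurable hXm hμbar_meas.stronglyMeasurable hμbar_int
  -- f as a sum
  have hsplit : (fun ω' => (B ω' / πbar ω') * (Y ω' - μbar ω') + μbar ω')
      = (F1 + F2) + μbar := by
    funext ω
    simp only [Pi.add_apply, hF1, hF2]
    field_simp
    ring
  have h12 := condExp_add (μ := P) (m := 𝒳) (hint1.add hint2) hμbar_int
  have h12' := condExp_add (μ := P) (m := 𝒳) hint1 hint2
  -- condexp of f wrt 𝒳
  have hfX : P[(fun ω' => (B ω' / πbar ω') * (Y ω' - μbar ω') + μbar ω') | 𝒳] =ᵐ[P]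
      fun ω => ((π ω - πbar ω) / πbar ω) * (μ ω - μbar ω) + μ ω := by
    rw [hsplit]
    refine h12.trans ?_
    filter_upwards [h12', hf1, hf2] with ω ha hb hc
    simp only [Pi.add_apply] at ha hb hc ⊢
    rw [ha, hb, hc, hf3]
    have hne := hπbar_ne ω
    field_simp
    ring
  -- target integrability
  have htarget_int : Integrable (fun ω' => ((π ω' - πbar ω') / πbar ω') * (μ ω' - μbar ω')) P := by
    refine key _ (((hπm.sub hπbm).div hπbm).mul (hμm.sub hμbm))
      ⟨((|Mπ| + |Mπb|) * ε⁻¹) * (|Mμ| + |Mμb|), fun ω => by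
        rw [abs_mul, div_eq_mul_inv, abs_mul]
        refine mul_le_mul (mul_le_mul ?_ (hinv_bdd ω) (abs_nonneg _) (by positivity)) ?_
          (abs_nonneg _) (by positivity)
        · exact (abs_sub _ _).trans (add_le_add ((hMπ ω).trans (le_abs_self _))
            ((hMπb ω).trans (le_abs_self _)))
        · exact (abs_sub _ _).trans (add_le_add ((hMμ ω).trans (le_abs_self _))
            ((hMμb ω).trans (le_abs_self _)))⟩
  -- tower property
  have htower : P[(fun ω' => (B ω' / πbar ω') * (Y ω' - μbar ω') + μbar ω') | 𝒱] =ᵐ[P]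
      P[(fun ω => ((π ω - πbar ω) / πbar ω) * (μ ω - μbar ω) + μ ω) | 𝒱] :=
    ((condExp_condExp_of_le (μ := P)
      (f := fun ω' => (B ω' / πbar ω') * (Y ω' - μbar ω') + μbar ω') hVX hXm).symm).trans
      (condExp_congr_ae hfX)
  have hadd' : (fun ω => ((π ω - πbar ω) / πbar ω) * (μ ω - μbar ω) + μ ω)
      = (fun ω' => ((π ω' - πbar ω') / πbar ω') * (μ ω' - μbar ω')) + μ := rfl
  have hadd : P[(fun ω => ((π ω - πbar ω) / πbar ω) * (μ ω - μbar ω) + μ ω) | 𝒱] =ᵐ[P]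
      P[(fun ω' => ((π ω' - πbar ω') / πbar ω') * (μ ω' - μbar ω')) | 𝒱] + P[μ | 𝒱] := by
    rw [hadd']
    exact condExp_add (μ := P) (m := 𝒱) htarget_int hμ_int
  filter_upwards [htower, hadd] with ω h1' h2'
  rw [h1', h2']
  simp only [Pi.add_apply]
  ring
end

section
/- Let (Ω, ℱ, P) be a probability space, let X : Ω → 𝒳 be measurable into a measurable space 𝒳, let B : Ω → {0,1} be measurable, and let Y, W : Ω → ℝ be bounded measurable. Assume: (i) consistency: B·Y = B·W almost surely; and (ii) exchangeability: B and W are conditionally independent given σ(X). Then E[B·Y | σ(X)] = E[B | σ(X)]·E[W | σ(X)] almost surely. -/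
open MeasureTheory ProbabilityTheory MeasurableSpace

/-!
As `ℝ × ℝ` is countably generated, conditional independence given `m` can be checked on countably
many sets at once: for almost every `ω`, `B` and `W` are independent under the regular conditional
probability `condExpKernel P m ω`; integrating against that kernel,
`E[B·W | m] = E[B | m]·E[W | m]`. Consistency lets `B·Y` be replaced by `B·W` inside the
conditional expectation.
-/

namespace ProbabilityTheory

variable {Ω : Type*} {m mΩ : MeasurableSpace Ω} [StandardBorelSpace Ω] {hm : m ≤ mΩ}
  {μ : Measure Ω} [IsFiniteMeasure μ]

theorem CondIndepFun.ae_indepFun_condExpKernel {β β' : Type*} {mβ : MeasurableSpace β}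
    {mβ' : MeasurableSpace β'} [CountableOrCountablyGenerated Ω (β × β')] {f : Ω → β}
    {g : Ω → β'} (hf : Measurable f) (hg : Measurable g) (hfg : CondIndepFun m hm f g μ) :
    ∀ᵐ ω ∂μ, IndepFun f g (condExpKernel μ m ω) := by
  have h := (condIndepFun_iff_map_prod_eq_prod_map_map hf hg).1 hfg
  filter_upwards [ae_of_ae_trim hm h] with ω hω
  rw [indepFun_iff_map_prod_eq_prod_map_map hf.aemeasurable hg.aemeasurable]
  simpa [Kernel.prod_apply, Kernel.map_apply _ hf, Kernel.map_apply _ hg,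
    Kernel.map_apply _ (hf.prodMk hg)] using hω

theorem CondIndepFun.condExp_mul_ae_eq {f g : Ω → ℝ} (hf : Measurable f) (hg : Measurable g)
    (hf_int : Integrable f μ) (hg_int : Integrable g μ) (hfg_int : Integrable (f * g) μ)
    (hfg : CondIndepFun m hm f g μ) :
    μ[f * g | m] =ᵐ[μ] μ[f | m] * μ[g | m] := by
  filter_upwards [hfg.ae_indepFun_condExpKernel hf hg,
    condExp_ae_eq_integral_condExpKernel hm hfg_int,
    condExp_ae_eq_integral_condExpKernel hm hf_int,
    condExp_ae_eq_integral_condExpKernel hm hg_int] with ω hindep hfg_eq hf_eq hg_eq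
  rw [hfg_eq, Pi.mul_apply, hf_eq, hg_eq]
  exact hindep.integral_mul_eq_mul_integral hf.aestronglyMeasurable hg.aestronglyMeasurable

end ProbabilityTheory

theorem stmt_19_general {Ω 𝒳 : Type*} [MeasurableSpace Ω] [StandardBorelSpace Ω]
    [MeasurableSpace 𝒳]
    (P : Measure Ω) [IsProbabilityMeasure P]
    (X : Ω → 𝒳) (hX : Measurable X)
    (B : Ω → ℝ) (hB_meas : Measurable B) (hB01 : ∀ ω, B ω = 0 ∨ B ω = 1)
    (Y W : Ω → ℝ)
    (hW_meas : Measurable W) (hW_bdd : ∃ M : ℝ, ∀ ω, |W ω| ≤ M)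
    (hcons : ∀ᵐ ω ∂P, B ω * Y ω = B ω * W ω)
    (hexch : CondIndepFun (MeasurableSpace.comap X inferInstance) hX.comap_le B W P) :
    P[fun ω => B ω * Y ω | MeasurableSpace.comap X inferInstance]
      =ᵐ[P] fun ω =>
        (P[B | MeasurableSpace.comap X inferInstance]) ω
          * (P[W | MeasurableSpace.comap X inferInstance]) ω := by
  obtain ⟨M, hM⟩ := hW_bdd
  have hB_le : ∀ᵐ ω ∂P, ‖B ω‖ ≤ 1 :=
    ae_of_all _ fun ω => by rcases hB01 ω with h | h <;> simp [h]
  have hB_int : Integrable B P := .of_bound hB_meas.aestronglyMeasurable 1 hB_le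
  have hW_int : Integrable W P := .of_bound hW_meas.aestronglyMeasurable M (ae_of_all _ hM)
  calc P[fun ω => B ω * Y ω | MeasurableSpace.comap X inferInstance]
      =ᵐ[P] P[B * W | MeasurableSpace.comap X inferInstance] := condExp_congr_ae hcons
    _ =ᵐ[P] _ := hexch.condExp_mul_ae_eq hB_meas hW_meas hB_int hW_int
        (hW_int.bdd_mul hB_meas.aestronglyMeasurable hB_le)

/-- Identification kernel underlying Proposition 1 (prop:id): with consistency
`B·Y = B·W` a.s. and exchangeability (conditional independence of `B` and `W` given
`σ(X)`), the observed-data regression factors: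
`E[B·Y | σ(X)] = E[B | σ(X)] · E[W | σ(X)]` almost surely. -/
theorem stmt_19 {Ω 𝒳 : Type*} [MeasurableSpace Ω] [StandardBorelSpace Ω] [Nonempty Ω]
    [MeasurableSpace 𝒳]
    (P : Measure Ω) [IsProbabilityMeasure P]
    (X : Ω → 𝒳) (hX : Measurable X)
    (B : Ω → ℝ) (hB_meas : Measurable B) (hB01 : ∀ ω, B ω = 0 ∨ B ω = 1)
    (Y W : Ω → ℝ)
    (hY_meas : Measurable Y) (hY_bdd : ∃ M : ℝ, ∀ ω, |Y ω| ≤ M)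
    (hW_meas : Measurable W) (hW_bdd : ∃ M : ℝ, ∀ ω, |W ω| ≤ M)
    (hcons : ∀ᵐ ω ∂P, B ω * Y ω = B ω * W ω)
    (hexch : CondIndepFun (MeasurableSpace.comap X inferInstance) hX.comap_le B W P) :
    P[fun ω => B ω * Y ω | MeasurableSpace.comap X inferInstance]
      =ᵐ[P] fun ω =>
        (P[B | MeasurableSpace.comap X inferInstance]) ω
          * (P[W | MeasurableSpace.comap X inferInstance]) ω :=
  stmt_19_general P X hX B hB_meas hB01 Y W hW_meas hW_bdd hcons hexch
end
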